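/- Let H be a graph, G a graph, and u a positive integer with dom(H) ≥ u. Then chose(dom(H), u) · N(H,G) = Σ_{c ∈ K^u(G)} N_c(H,G), where the sum is over all u-cliques c of G and N_c(H,G) is the number of subgraphs J of G isomorphic to H such that every vertex of c is a dominating vertex of J. -/

import Mathlib

open SimpleGraph Finset Filter Topology

/-- `F` is contained in `G` as a subgraph: there is an injective graph homomorphism. -/
def Graph.Contains {β α : Type*} (F : SimpleGraph β) (G : SimpleGraph α) : Prop :=
  ∃ f : F →g G, Function.Injective f

/-- The number of subgraphs of `G` isomorphic to `H`. -/
noncomputable def copyCount' {β α : Type*} (H : SimpleGraph β) (G : SimpleGraph α) : ℕ :=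
  {J : G.Subgraph | Nonempty (J.coe ≃g H)}.ncard

/-- The number of `u`-cliques of `G`. -/
noncomputable def kclique {α : Type*} (u : ℕ) (G : SimpleGraph α) : ℕ :=
  {s : Finset α | G.IsNClique u s}.ncard

/-- The set of dominating vertices of a graph. -/
def domSet {α : Type*} (H : SimpleGraph α) : Set α := {v | ∀ w, w ≠ v → H.Adj v w}

/-- The number of dominating vertices of a graph. -/
noncomputable def domCount {α : Type*} (H : SimpleGraph α) : ℕ := (domSet H).ncard

/-- The set of dominating vertices of a subgraph `J`: vertices of `J` adjacent in `J`
to all other vertices of `J`. -/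
def subDomSet {α : Type*} {G : SimpleGraph α} (J : G.Subgraph) : Set α :=
  {v ∈ J.verts | ∀ w ∈ J.verts, w ≠ v → J.Adj v w}

/-- The common neighborhood of a finite vertex set `c` in `G`. -/
def commonNbhd {α : Type*} (G : SimpleGraph α) (c : Finset α) : Set α :=
  {v | ∀ x ∈ c, G.Adj x v}

/-- `ω(c)`: the size of a largest clique of `G` containing `c`. -/
noncomputable def omegaC {α : Type*} (G : SimpleGraph α) (c : Finset α) : ℕ :=
  sSup {m | ∃ s : Finset α, c ⊆ s ∧ G.IsNClique m s}

/-- `Δ(c)`: the number of common neighbors of `c` in `G`. -/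
noncomputable def deltaC {α : Type*} (G : SimpleGraph α) (c : Finset α) : ℕ :=
  (commonNbhd G c).ncard

/-- `ω(J)`: the max of `ω(c)` over `u`-sets `c` of dominating vertices of the subgraph `J`. -/
noncomputable def omegaJ {α : Type*} (G : SimpleGraph α) (u : ℕ) (J : G.Subgraph) : ℕ :=
  sSup {m | ∃ c : Finset α, ↑c ⊆ subDomSet J ∧ c.card = u ∧ m = omegaC G c}

/-- `Δ(J)`: the max of `Δ(c)` over `u`-sets `c` of dominating vertices of the subgraph `J`. -/
noncomputable def deltaJ {α : Type*} (G : SimpleGraph α) (u : ℕ) (J : G.Subgraph) : ℕ :=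
  sSup {m | ∃ c : Finset α, ↑c ⊆ subDomSet J ∧ c.card = u ∧ m = deltaC G c}

/-- The complete split graph `K_u ∨ I_d`. -/
def completeSplitGraph (u d : ℕ) : SimpleGraph (Fin u ⊕ Fin d) where
  Adj x y := x ≠ y ∧ (x.isLeft ∨ y.isLeft)
  symm := by constructor; rintro x y ⟨h1, h2⟩; exact ⟨h1.symm, h2.symm⟩
  loopless := by constructor; rintro x ⟨h, -⟩; exact h rfl

/-- Disjoint union of a family of graphs. -/
def sigmaGraph {ι : Type*} {β : ι → Type*} (G : ∀ i, SimpleGraph (β i)) :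
    SimpleGraph (Σ i, β i) where
  Adj x y := ∃ (i : ι) (a b : β i), x = ⟨i, a⟩ ∧ y = ⟨i, b⟩ ∧ (G i).Adj a b
  symm := by constructor; rintro x y ⟨i, a, b, rfl, rfl, hab⟩; exact ⟨i, b, a, rfl, rfl, hab.symm⟩
  loopless := by
    constructor
    rintro x ⟨i, a, b, rfl, h2, hab⟩
    injection h2 with h1 h2'
    exact hab.ne h2'

/-- `ex_u(p, H, F)`: maximum number of copies of `H` in an `F`-free graph with exactly
`p` `u`-cliques (graphs taken on `Fin n` for some `n`). -/
noncomputable def exu {ι : Type*} {β : ι → Type*} (u p : ℕ) {h : ℕ} (H : SimpleGraph (Fin h))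
    (F : ∀ i, SimpleGraph (β i)) : ℕ :=
  sSup {N | ∃ (n : ℕ) (G : SimpleGraph (Fin n)),
    (∀ i, ¬ Graph.Contains (F i) G) ∧ kclique u G = p ∧ copyCount' H G = N}

/-
Double counting the pairs `(c, J)` with `J` a copy of `H` in `G` and `c` a `u`-set of dominating
vertices of `J`. The dominating vertices of a subgraph form a clique of `G`, so every such `c` is
a `u`-clique; and an isomorphism `J ≃g H` carries dominating vertices to dominating vertices, so
each copy `J` contributes exactly `C(dom H, u)` pairs.
-/

namespace SimpleGraph

variable {α β V : Type*}

lemma Iso.apply_mem_domSet_iff {A : SimpleGraph α} {B : SimpleGraph β} (e : A ≃g B) (v : α) :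
    e v ∈ domSet B ↔ v ∈ domSet A := by
  simp only [domSet, Set.mem_ofPred_eq]
  rw [← e.toEquiv.forall_congr_right]
  simp [e.map_adj_iff]

lemma Iso.domCount_eq {A : SimpleGraph α} {B : SimpleGraph β} (e : A ≃g B) :
    domCount A = domCount B := by
  rw [domCount, domCount, ← Nat.card_coe_set_eq, ← Nat.card_coe_set_eq]
  exact Nat.card_congr (e.toEquiv.subtypeEquiv fun v => (e.apply_mem_domSet_iff v).symm)

variable {G : SimpleGraph V}

lemma Subgraph.subDomSet_eq_image_domSet (J : G.Subgraph) :
    subDomSet J = Subtype.val '' domSet J.coe := by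
  ext v
  constructor
  · rintro ⟨hv, hdom⟩
    exact ⟨⟨v, hv⟩, fun w hw => hdom w w.2 (Subtype.coe_ne_coe.mpr hw), rfl⟩
  · rintro ⟨⟨v, hv⟩, hdom, rfl⟩
    exact ⟨hv, fun w hw hne => hdom ⟨w, hw⟩ (Subtype.coe_ne_coe.mp hne)⟩

lemma Subgraph.ncard_subDomSet (J : G.Subgraph) : (subDomSet J).ncard = domCount J.coe := by
  rw [subDomSet_eq_image_domSet, Set.ncard_image_of_injective _ Subtype.val_injective, domCount]

lemma Subgraph.isClique_subDomSet (J : G.Subgraph) : G.IsClique (subDomSet J) :=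
  fun _ hx _ hy hne => J.adj_sub (hx.2 _ hy.1 hne.symm)

lemma card_filter_cliqueFinset_subset [Fintype V] [DecidableEq V] [DecidableRel G.Adj]
    {s : Set V} (hs : G.IsClique s) (u : ℕ) [DecidablePred fun c : Finset V => (c : Set V) ⊆ s] :
    #((G.cliqueFinset u).filter fun c : Finset V => (c : Set V) ⊆ s) = s.ncard.choose u := by
  lift s to Finset V using s.toFinite
  have : (G.cliqueFinset u).filter (fun c : Finset V => (c : Set V) ⊆ s) = s.powersetCard u := by
    ext c
    simp only [mem_filter, mem_cliqueFinset_iff, mem_powersetCard, coe_subset]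
    exact ⟨fun ⟨hc, hcs⟩ => ⟨hcs, hc.card_eq⟩, fun ⟨hcs, hcard⟩ => ⟨⟨hs.subset hcs, hcard⟩, hcs⟩⟩
  rw [this, card_powersetCard, Set.ncard_coe_finset]

end SimpleGraph

theorem stmt7_general {h : ℕ} (H : SimpleGraph (Fin h)) (u : ℕ) {V : Type*} [Fintype V] [DecidableEq V]
    (G : SimpleGraph V) [DecidableRel G.Adj] :
    (domCount H).choose u * copyCount' H G =
      ∑ c ∈ G.cliqueFinset u,
        {J : G.Subgraph | Nonempty (J.coe ≃g H) ∧ ↑c ⊆ subDomSet J}.ncard := by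
  classical
  let copies : Finset G.Subgraph := {J | Nonempty (J.coe ≃g H)}
  let r (J : G.Subgraph) (c : Finset V) : Prop := (c : Set V) ⊆ subDomSet J
  have hcopies : copyCount' H G = #copies := by
    rw [copyCount', ← Set.ncard_coe_finset, coe_filter]
    simp
  have hchoose :
      ∀ J ∈ copies, #((G.cliqueFinset u).bipartiteAbove r J) = (domCount H).choose u := by
    intro J hJ
    obtain ⟨e⟩ := (mem_filter.mp hJ).2
    rw [bipartiteAbove, card_filter_cliqueFinset_subset J.isClique_subDomSet,
      J.ncard_subDomSet, e.domCount_eq]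
  calc (domCount H).choose u * copyCount' H G
      = ∑ J ∈ copies, #((G.cliqueFinset u).bipartiteAbove r J) := by
        rw [sum_congr rfl hchoose, sum_const, smul_eq_mul, hcopies, mul_comm]
    _ = ∑ c ∈ G.cliqueFinset u, #(copies.bipartiteBelow r c) :=
        sum_card_bipartiteAbove_eq_sum_card_bipartiteBelow r
    _ = _ := by
        refine sum_congr rfl fun c _ => ?_
        rw [bipartiteBelow, ← Set.ncard_coe_finset, coe_filter]
        simp [copies, r]

/-- double counting: `C(dom H, u) · N(H,G) = Σ_{c ∈ K^u(G)} N_c(H,G)`. -/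
theorem stmt7 {h : ℕ} (H : SimpleGraph (Fin h)) (u : ℕ) (hu : 1 ≤ u)
    (hdom : u ≤ domCount H) {V : Type*} [Fintype V] [DecidableEq V]
    (G : SimpleGraph V) [DecidableRel G.Adj] :
    (domCount H).choose u * copyCount' H G =
      ∑ c ∈ G.cliqueFinset u,
        {J : G.Subgraph | Nonempty (J.coe ≃g H) ∧ ↑c ⊆ subDomSet J}.ncard :=
  stmt7_general H u G
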